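/- Let A be an N×N Hermitian matrix with eigenvalues 1 ≥ λ₀ ≥ ⋯ ≥ λ_{N−1} ≥ 0 and let α > 0. Define A_tik = (A*A + αI)⁻¹A*. Fix ε ∈ (0,1/2) and let r = #{ℓ : α(1+α)ε < λ_ℓ < 1 − ε/3}. Then there exist an N×r matrix U₅ and an N×N matrix E with ‖E‖ ≤ ε such that A_tik = (1/(1+α))A + U₅U₅* + E. -/
import Mathlib


open Matrix
open scoped Matrix.Norms.L2Operator

noncomputable def opNorm {𝕜 : Type*} [RCLike 𝕜] {m n : ℕ} (M : Matrix (Fin m) (Fin n) 𝕜) : ℝ :=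
  ‖LinearMap.toContinuousLinearMap (Matrix.toEuclideanLin M)‖

lemma opNorm_eq_l2 {m n : ℕ} (M : Matrix (Fin m) (Fin n) ℂ) : opNorm M = ‖M‖ := rfl

lemma norm_diagonal_le {n : ℕ} (d : Fin n → ℂ) (c : ℝ) (hc : 0 ≤ c)
    (h : ∀ i, ‖d i‖ ≤ c) : ‖(Matrix.diagonal d : Matrix (Fin n) (Fin n) ℂ)‖ ≤ c := by
  rw [Matrix.l2_opNorm_def]
  refine ContinuousLinearMap.opNorm_le_bound _ hc ?_
  intro x
  have happ : ∀ i, (Matrix.toEuclideanLin (Matrix.diagonal d) x) i = d i * x i := by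
    intro i
    simp [Matrix.toEuclideanLin_apply, Matrix.mulVec_diagonal]
  have h1 : ‖Matrix.toEuclideanLin (Matrix.diagonal d) x‖
      = Real.sqrt (∑ i, ‖d i * x i‖ ^ 2) := by
    rw [EuclideanSpace.norm_eq]
    congr 1
    refine Finset.sum_congr rfl fun i _ => ?_
    rw [happ i]
  have h2 : ‖x‖ = Real.sqrt (∑ i, ‖x i‖ ^ 2) := by
    rw [EuclideanSpace.norm_eq]
  show ‖Matrix.toEuclideanLin (Matrix.diagonal d) x‖ ≤ c * ‖x‖
  rw [h1, h2]
  rw [show c * Real.sqrt (∑ i, ‖x i‖ ^ 2) = Real.sqrt (c^2 * ∑ i, ‖x i‖ ^ 2) by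
    rw [Real.sqrt_mul (sq_nonneg c), Real.sqrt_sq hc]]
  apply Real.sqrt_le_sqrt
  rw [Finset.mul_sum]
  refine Finset.sum_le_sum fun i _ => ?_
  rw [norm_mul, mul_pow]
  have h3 := h i
  have h4 : ‖d i‖^2 ≤ c^2 := by nlinarith [norm_nonneg (d i)]
  nlinarith [sq_nonneg (‖x i‖), norm_nonneg (x i)]

set_option maxHeartbeats 1000000 in
/-- If `A` is Hermitian with eigenvalues `1 ≥ μ 0 ≥ ⋯ ≥ μ (N-1) ≥ 0`, `α > 0`,
`A_tik = (AᴴA + αI)⁻¹ Aᴴ`, `ε ∈ (0,1/2)`, and `r` is the number of eigenvalues in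
`(α(1+α)ε, 1 - ε/3)`, then `A_tik = (1/(1+α)) A + U₅ U₅ᴴ + E` with `U₅` of width `r`
and `‖E‖ ≤ ε`. -/
theorem stmt4 {N : ℕ} (A : Matrix (Fin N) (Fin N) ℂ) (hA : A.IsHermitian)
    (μ : Fin N → ℝ) (hmono : Antitone μ) (hμ : ∀ i, 0 ≤ μ i ∧ μ i ≤ 1)
    (V : Matrix (Fin N) (Fin N) ℂ) (hV : V ∈ Matrix.unitaryGroup (Fin N) ℂ)
    (hdiag : A = V * Matrix.diagonal (fun i => (μ i : ℂ)) * Vᴴ)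
    (α : ℝ) (hα : 0 < α)
    (ε : ℝ) (hε : 0 < ε) (hε2 : ε < 1/2)
    (r : ℕ)
    (hr : r = (Finset.univ.filter fun ℓ : Fin N =>
        α * (1 + α) * ε < μ ℓ ∧ μ ℓ < 1 - ε / 3).card) :
    ∃ (U₅ : Matrix (Fin N) (Fin r) ℂ) (E : Matrix (Fin N) (Fin N) ℂ),
      opNorm E ≤ ε ∧
      (Aᴴ * A + (α : ℂ) • 1)⁻¹ * Aᴴ = (((1 / (1 + α) : ℝ)) : ℂ) • A + U₅ * U₅ᴴ + E := by
  classical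
  have hVV : Vᴴ * V = 1 := by
    have := hV.1; rwa [Matrix.star_eq_conjTranspose] at this
  have hVV' : V * Vᴴ = 1 := by
    have := hV.2; rwa [Matrix.star_eq_conjTranspose] at this
  -- sandwich lemmas
  have key : ∀ a b : Fin N → ℝ,
      (V * Matrix.diagonal (fun i => (a i : ℂ)) * Vᴴ) *
        (V * Matrix.diagonal (fun i => (b i : ℂ)) * Vᴴ)
      = V * Matrix.diagonal (fun i => ((a i * b i : ℝ) : ℂ)) * Vᴴ := by
    intro a b
    calc (V * Matrix.diagonal (fun i => (a i : ℂ)) * Vᴴ) *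
        (V * Matrix.diagonal (fun i => (b i : ℂ)) * Vᴴ)
        = V * Matrix.diagonal (fun i => (a i : ℂ)) * (Vᴴ * V) *
            Matrix.diagonal (fun i => (b i : ℂ)) * Vᴴ := by
          simp only [Matrix.mul_assoc]
      _ = V * (Matrix.diagonal (fun i => (a i : ℂ)) *
            Matrix.diagonal (fun i => (b i : ℂ))) * Vᴴ := by
          rw [hVV]; simp only [Matrix.mul_assoc, Matrix.one_mul]
      _ = _ := by
          rw [Matrix.diagonal_mul_diagonal]
          push_cast
          rfl
  have keyadd : ∀ a b : Fin N → ℝ,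
      (V * Matrix.diagonal (fun i => (a i : ℂ)) * Vᴴ) +
        (V * Matrix.diagonal (fun i => (b i : ℂ)) * Vᴴ)
      = V * Matrix.diagonal (fun i => ((a i + b i : ℝ) : ℂ)) * Vᴴ := by
    intro a b
    rw [← Matrix.add_mul, ← Matrix.mul_add, Matrix.diagonal_add]
    congr 2
    funext i
    push_cast
    ring
  have hAH : Aᴴ = V * Matrix.diagonal (fun i => (μ i : ℂ)) * Vᴴ := by
    rw [hA.eq, hdiag]
  -- A^H A + α I
  have hsmul1 : (α : ℂ) • (1 : Matrix (Fin N) (Fin N) ℂ)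
      = V * Matrix.diagonal (fun _ => ((α : ℝ) : ℂ)) * Vᴴ := by
    have hd : Matrix.diagonal (fun _ : Fin N => ((α : ℝ) : ℂ)) = (α : ℂ) • 1 := by
      ext i j
      by_cases h : i = j <;> simp [Matrix.diagonal, h, Matrix.one_apply]
    rw [hd, Matrix.mul_smul, Matrix.smul_mul, Matrix.mul_one, hVV']
  have hM : Aᴴ * A + (α : ℂ) • 1
      = V * Matrix.diagonal (fun i => ((μ i * μ i + α : ℝ) : ℂ)) * Vᴴ := by
    rw [hAH, hdiag, key, hsmul1, keyadd]
  have hpos : ∀ i, (0:ℝ) < μ i * μ i + α := fun i => by nlinarith [(hμ i).1]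
  have hinv : (Aᴴ * A + (α : ℂ) • 1)⁻¹
      = V * Matrix.diagonal (fun i => (((μ i * μ i + α)⁻¹ : ℝ) : ℂ)) * Vᴴ := by
    apply Matrix.inv_eq_right_inv
    rw [hM, key]
    have : (fun i => ((((μ i * μ i + α) * (μ i * μ i + α)⁻¹ : ℝ)) : ℂ))
        = fun _ => (1 : ℂ) := by
      funext i
      rw [mul_inv_cancel₀ (ne_of_gt (hpos i))]
      norm_num
    rw [this, Matrix.diagonal_one, Matrix.mul_one, hVV']
  -- the tikhonov matrix
  set t : Fin N → ℝ := fun i => (μ i * μ i + α)⁻¹ * μ i with ht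
  have htik : (Aᴴ * A + (α : ℂ) • 1)⁻¹ * Aᴴ
      = V * Matrix.diagonal (fun i => ((t i : ℝ) : ℂ)) * Vᴴ := by
    rw [hinv, hAH, key]
  -- define the pieces
  set S : Finset (Fin N) := Finset.univ.filter fun ℓ : Fin N =>
      α * (1 + α) * ε < μ ℓ ∧ μ ℓ < 1 - ε / 3 with hS
  set f : Fin N → ℝ := fun ℓ => μ ℓ / (μ ℓ * μ ℓ + α) - μ ℓ / (1 + α) with hf
  set g : Fin N → ℝ := fun ℓ => if ℓ ∈ S then f ℓ else 0 with hg
  set e : Fin N → ℝ := fun ℓ => if ℓ ∈ S then 0 else f ℓ with he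
  have h1α : (0:ℝ) < 1 + α := by linarith
  have hf0 : ∀ ℓ, 0 ≤ f ℓ := by
    intro ℓ
    have h1 := (hμ ℓ).1; have h2 := (hμ ℓ).2
    have : f ℓ = μ ℓ * (1 - μ ℓ * μ ℓ) / ((μ ℓ * μ ℓ + α) * (1 + α)) := by
      rw [hf]
      field_simp
      ring
    rw [this]
    apply div_nonneg
    · nlinarith
    · positivity
  have hfε : ∀ ℓ, ℓ ∉ S → f ℓ ≤ ε := by
    intro ℓ hℓ
    have h1 := (hμ ℓ).1; have h2 := (hμ ℓ).2
    have hd : (0:ℝ) < (μ ℓ * μ ℓ + α) * (1 + α) := by positivity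
    have hfle : f ℓ = μ ℓ * (1 - μ ℓ * μ ℓ) / ((μ ℓ * μ ℓ + α) * (1 + α)) := by
      rw [hf]; field_simp; ring
    rw [hfle, div_le_iff₀ hd]
    rw [hS] at hℓ
    simp only [Finset.mem_filter, Finset.mem_univ, true_and, not_and, not_lt] at hℓ
    by_cases hcase : α * (1 + α) * ε < μ ℓ
    · -- then μ ℓ ≥ 1 - ε/3
      have h3 : 1 - ε / 3 ≤ μ ℓ := hℓ hcase
      have h56 : (5:ℝ)/6 ≤ μ ℓ := by linarith
      have a1 : (0:ℝ) ≤ 1 - μ ℓ := by linarith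
      have a2 : 1 - μ ℓ ≤ ε/3 := by linarith
      have lhs_le : μ ℓ * (1 - μ ℓ * μ ℓ) ≤ 2*ε/3 := by
        have e1 : μ ℓ * (1 - μ ℓ * μ ℓ) = (1 - μ ℓ) * (μ ℓ * (1 + μ ℓ)) := by ring
        have e2 : μ ℓ * (1 + μ ℓ) ≤ 2 := by nlinarith
        have e4 : (0:ℝ) ≤ μ ℓ * (1 + μ ℓ) := by nlinarith
        have e3 : (1 - μ ℓ) * (μ ℓ * (1 + μ ℓ)) ≤ (ε/3) * 2 :=
          mul_le_mul a2 e2 e4 (by linarith)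
        rw [e1]; linarith
      have h25 : (25:ℝ)/36 ≤ (μ ℓ * μ ℓ + α) * (1 + α) := by nlinarith
      have rhs_ge : ε * (25/36) ≤ ε * ((μ ℓ * μ ℓ + α) * (1 + α)) :=
        mul_le_mul_of_nonneg_left h25 (le_of_lt hε)
      linarith
    · push_neg at hcase
      have l1 : μ ℓ * (1 - μ ℓ * μ ℓ) ≤ μ ℓ := by nlinarith
      have l2 : α * (1 + α) ≤ (μ ℓ * μ ℓ + α) * (1 + α) := by nlinarith
      have l3 : ε * (α * (1 + α)) ≤ ε * ((μ ℓ * μ ℓ + α) * (1 + α)) :=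
        mul_le_mul_of_nonneg_left l2 (le_of_lt hε)
      nlinarith
  have htge : ∀ ℓ, t ℓ = 1 / (1 + α) * μ ℓ + g ℓ + e ℓ := by
    intro ℓ
    have hne : μ ℓ * μ ℓ + α ≠ 0 := ne_of_gt (hpos ℓ)
    have h1ne : (1 + α : ℝ) ≠ 0 := ne_of_gt h1α
    have hsum : g ℓ + e ℓ = f ℓ := by
      rw [hg, he]; by_cases h : ℓ ∈ S <;> simp [h]
    have hmain : t ℓ = 1 / (1 + α) * μ ℓ + f ℓ := by
      simp only [ht, hf]
      field_simp
      ring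
    rw [hmain, ← hsum]
    ring
  -- construct U₅
  have hScard : S.card = r := hr.symm
  let emb : Fin r → Fin N := fun j => (S.equivFin.symm (Fin.cast hScard.symm j)).1
  have hembS : ∀ j, emb j ∈ S := fun j => (S.equivFin.symm (Fin.cast hScard.symm j)).2
  have hembinj : Function.Injective emb := by
    intro a b hab
    have := Subtype.ext hab
    have h2 := S.equivFin.symm.injective this
    exact Fin.cast_injective _ h2
  have hsurj : ∀ i ∈ S, ∃ j, emb j = i := by
    intro i hi
    refine ⟨Fin.cast hScard (S.equivFin ⟨i, hi⟩), ?_⟩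
    simp [emb]
  have hg0 : ∀ i, 0 ≤ g i := by
    intro i; rw [hg]; by_cases h : i ∈ S <;> simp [h, hf0 i]
  have hgS : ∀ i, i ∉ S → g i = 0 := by intro i h; rw [hg]; simp [h]
  let P : Matrix (Fin N) (Fin r) ℂ :=
    Matrix.of fun i j => if i = emb j then (Real.sqrt (g i) : ℂ) else 0
  have hPP : P * Pᴴ = Matrix.diagonal (fun i => ((g i : ℝ) : ℂ)) := by
    ext i k
    rw [Matrix.mul_apply]
    have hterm : ∀ j, P i j * Pᴴ j k
        = if i = emb j ∧ k = emb j then ((Real.sqrt (g i) : ℂ) * (Real.sqrt (g k) : ℂ)) else 0 := by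
      intro j
      rw [Matrix.conjTranspose_apply]
      by_cases h1 : i = emb j <;> by_cases h2 : k = emb j <;>
        simp [P, h1, h2, Complex.conj_ofReal]
    simp only [hterm]
    by_cases hik : i = k
    · subst hik
      by_cases hiS : i ∈ S
      · obtain ⟨j₀, hj₀⟩ := hsurj i hiS
        rw [Finset.sum_eq_single j₀]
        · rw [if_pos ⟨hj₀.symm, hj₀.symm⟩, Matrix.diagonal_apply_eq,
            ← Complex.ofReal_mul, Real.mul_self_sqrt (hg0 i)]
        · intro b _ hb
          rw [if_neg]
          rintro ⟨hb1, -⟩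
          exact hb (hembinj (hj₀.trans hb1).symm)
        · intro h; exact absurd (Finset.mem_univ j₀) h
      · rw [Matrix.diagonal_apply_eq, hgS i hiS]
        rw [Finset.sum_eq_zero]
        · simp
        · intro j _
          rw [if_neg]
          rintro ⟨h1, -⟩
          exact hiS (h1 ▸ hembS j)
    · rw [Matrix.diagonal_apply_ne _ hik]
      apply Finset.sum_eq_zero
      intro j _
      rw [if_neg]
      rintro ⟨h1, h2⟩
      exact hik (h1.trans h2.symm)
  refine ⟨V * P, V * Matrix.diagonal (fun ℓ => ((e ℓ : ℝ) : ℂ)) * Vᴴ, ?_, ?_⟩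
  · -- norm bound
    rw [opNorm_eq_l2]
    have hV1 : ‖V‖ ≤ 1 := by
      have h1 : ‖Vᴴ * V‖ = ‖V‖ * ‖V‖ := Matrix.l2_opNorm_conjTranspose_mul_self V
      rw [hVV] at h1
      have h2 : ‖(1 : Matrix (Fin N) (Fin N) ℂ)‖ ≤ 1 := by
        rw [← Matrix.diagonal_one]
        exact norm_diagonal_le _ 1 zero_le_one (fun i => by simp)
      nlinarith [norm_nonneg V]
    have hVH : ‖Vᴴ‖ ≤ 1 := by rw [Matrix.l2_opNorm_conjTranspose]; exact hV1
    have hDe : ‖Matrix.diagonal (fun ℓ => ((e ℓ : ℝ) : ℂ))‖ ≤ ε := by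
      apply norm_diagonal_le _ _ (le_of_lt hε)
      intro i
      rw [Complex.norm_real, Real.norm_eq_abs]
      rw [he]
      by_cases h : i ∈ S
      · simp [h, le_of_lt hε]
      · simp only [h, if_false]
        rw [abs_of_nonneg (hf0 i)]
        exact hfε i h
    calc ‖V * Matrix.diagonal (fun ℓ => ((e ℓ : ℝ) : ℂ)) * Vᴴ‖
        ≤ ‖V * Matrix.diagonal (fun ℓ => ((e ℓ : ℝ) : ℂ))‖ * ‖Vᴴ‖ :=
          Matrix.l2_opNorm_mul _ _
      _ ≤ (‖V‖ * ‖Matrix.diagonal (fun ℓ => ((e ℓ : ℝ) : ℂ))‖) * ‖Vᴴ‖ :=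
          mul_le_mul_of_nonneg_right (Matrix.l2_opNorm_mul _ _) (norm_nonneg _)
      _ ≤ (1 * ε) * 1 := by
          refine mul_le_mul (mul_le_mul hV1 hDe (norm_nonneg _) zero_le_one)
            hVH (norm_nonneg _) (by linarith)
      _ = ε := by ring
  · -- the decomposition
    rw [htik]
    have hU : (V * P) * (V * P)ᴴ
        = V * Matrix.diagonal (fun i => ((g i : ℝ) : ℂ)) * Vᴴ := by
      rw [Matrix.conjTranspose_mul]
      calc V * P * (Pᴴ * Vᴴ) = V * (P * Pᴴ) * Vᴴ := by
            simp only [Matrix.mul_assoc]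
        _ = _ := by rw [hPP]
    rw [hU]
    have hsmulA : (((1 / (1 + α) : ℝ)) : ℂ) • A
        = V * Matrix.diagonal (fun i => ((1 / (1 + α) * μ i : ℝ) : ℂ)) * Vᴴ := by
      rw [hdiag, ← Matrix.smul_mul, ← Matrix.mul_smul]
      congr 2
      ext i j
      by_cases h : i = j
      · subst h
        simp only [Matrix.smul_apply, Matrix.diagonal_apply_eq, smul_eq_mul]
        push_cast
        ring
      · simp [Matrix.diagonal_apply_ne _ h]
    have hfun : (fun i => ((t i : ℝ) : ℂ))
        = fun i => ((1 / (1 + α) * μ i + g i + e i : ℝ) : ℂ) :=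
      funext fun i => by rw [htge i]
    rw [hfun, hsmulA, keyadd, keyadd]
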